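/- If a ℤ×ℤ-graded module V = ⊕_{r,s∈ℤ} V_{r,s} over the non-graded Virasoro-like algebra (with central element c) satisfies L_{a,b}·V_{r,s} ⊆ V_{r+a,s+b+1} + V_{r+a,s+b} for all a,b,r,s, then c acts as zero on V. -/
import Mathlib


/-- Let V be a ℤ×ℤ-graded module over the non-graded Virasoro-like algebra
(with central element c acting via the operator C), given by operators
L_{a,b} satisfying the defining bracket relations (including the central
term). If L_{a,b}·V_{r,s} ⊆ V_{r+a,s+b+1} + V_{r+a,s+b} for all a,b,r,s,
then c acts as zero on V. -/
theorem stmt_3 {V : Type*} [AddCommGroup V] [Module ℂ V]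
    (g : ℤ × ℤ → Submodule ℂ V) (hg : DirectSum.IsInternal g)
    (L : ℤ → ℤ → Module.End ℂ V) (C : Module.End ℂ V)
    (hbr : ∀ a₁ b₁ a₂ b₂ : ℤ,
      ⁅L a₁ b₁, L a₂ b₂⁆
        = ((a₂ - a₁ : ℤ) : ℂ) • L (a₁ + a₂) (b₁ + b₂ + 1)
          + ((b₂ - b₁ : ℤ) : ℂ) • L (a₁ + a₂) (b₁ + b₂)
          + ((1 / 12 : ℂ) *
              (if a₁ + a₂ = 0 then
                  (if b₁ + b₂ = -3 then ((a₁ : ℂ)) ^ 3 else 0)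
                + (if b₁ + b₂ = -2 then 3 * ((b₁ : ℂ) + 1) * ((a₁ : ℂ)) ^ 2 else 0)
                + (if b₁ + b₂ = -1 then 3 * (b₁ : ℂ) * ((b₁ : ℂ) + 1) * (a₁ : ℂ) else 0)
                + (if b₁ + b₂ = 0 then (b₁ : ℂ) * (((b₁ : ℂ)) ^ 2 - 1) else 0)
              else 0)) • C)
    (hcent : ∀ a b : ℤ, ⁅C, L a b⁆ = 0)
    (hgrade : ∀ a b r s : ℤ, ∀ v ∈ g (r, s),
      L a b v ∈ g (r + a, s + b + 1) ⊔ g (r + a, s + b)) :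
    C = 0 := by
  have ind : iSupIndep g := hg.submodule_iSupIndep
  -- composite grading estimate
  have comp : ∀ (a b a' b' r s : ℤ), ∀ v ∈ g (r, s),
      L a' b' (L a b v) ∈
        g (r + a + a', s + b + b' + 2) ⊔ g (r + a + a', s + b + b' + 1)
          ⊔ g (r + a + a', s + b + b') := by
    intro a b a' b' r s v hv
    obtain ⟨x, hx, y, hy, e⟩ := Submodule.mem_sup.mp (hgrade a b r s v hv)
    rw [← e, map_add]
    refine add_mem ?_ ?_
    · have hst := hgrade a' b' (r + a) (s + b + 1) x hx
      rw [show s + b + 1 + b' + 1 = s + b + b' + 2 by ring,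
        show s + b + 1 + b' = s + b + b' + 1 by ring] at hst
      exact Submodule.mem_sup_left hst
    · have hst := hgrade a' b' (r + a) (s + b) y hy
      exact (sup_le (le_sup_of_le_left le_sup_right) le_sup_right :
        g (r + a + a', s + b + b' + 1) ⊔ g (r + a + a', s + b + b') ≤ _) hst
  have key : ∀ p : ℤ × ℤ, ∀ v ∈ g p, C v = 0 := by
    rintro ⟨r, s⟩ v hv
    have h1 := hbr 0 2 0 (-2)
    have h2 := hbr 1 (-2) (-1) (-1)
    norm_num at h1 h2
    have t1 := LinearMap.congr_fun h1 v
    have t2 := LinearMap.congr_fun h2 v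
    simp only [Ring.lie_def, LinearMap.sub_apply, Module.End.mul_apply, LinearMap.add_apply,
      LinearMap.smul_apply, LinearMap.neg_apply] at t1 t2
    have e1 : C v = (2:ℂ) • L 0 2 (L 0 (-2) v) - (2:ℂ) • L 0 (-2) (L 0 2 v)
        + (8:ℂ) • L 0 0 v := by
      linear_combination (norm := module) (-2:ℂ) • t1
    have e2 : C v = (12:ℂ) • L 1 (-2) (L (-1) (-1) v) - (12:ℂ) • L (-1) (-1) (L 1 (-2) v)
        + (24:ℂ) • L 0 (-2) v - (12:ℂ) • L 0 (-3) v := by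
      linear_combination (norm := module) (-12:ℂ) • t2
    have mem2 : C v ∈ g (r, s + 2) ⊔ g (r, s + 1) ⊔ g (r, s) := by
      rw [e1]
      refine add_mem (sub_mem (Submodule.smul_mem _ _ ?_) (Submodule.smul_mem _ _ ?_))
        (Submodule.smul_mem _ _ ?_)
      · have := comp 0 (-2) 0 2 r s v hv
        rw [show r + 0 + 0 = r by ring, show s + -2 + 2 + 2 = s + 2 by ring,
          show s + -2 + 2 + 1 = s + 1 by ring, show s + -2 + 2 = s by ring] at this
        exact this
      · have := comp 0 2 0 (-2) r s v hv
        rw [show r + 0 + 0 = r by ring, show s + 2 + -2 + 2 = s + 2 by ring,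
          show s + 2 + -2 + 1 = s + 1 by ring, show s + 2 + -2 = s by ring] at this
        exact this
      · have hst := hgrade 0 0 r s v hv
        rw [show r + 0 = r by ring, show s + 0 + 1 = s + 1 by ring,
          show s + 0 = s by ring] at hst
        exact (sup_le (le_sup_of_le_left le_sup_right) le_sup_right :
          g (r, s + 1) ⊔ g (r, s) ≤ _) hst
    have mem1 : C v ∈ g (r, s - 1) ⊔ g (r, s - 2) ⊔ g (r, s - 3) := by
      rw [e2]
      refine sub_mem (add_mem (sub_mem (Submodule.smul_mem _ _ ?_) (Submodule.smul_mem _ _ ?_))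
        (Submodule.smul_mem _ _ ?_)) (Submodule.smul_mem _ _ ?_)
      · have := comp (-1) (-1) 1 (-2) r s v hv
        rw [show r + -1 + 1 = r by ring, show s + -1 + -2 + 2 = s - 1 by ring,
          show s + -1 + -2 + 1 = s - 2 by ring, show s + -1 + -2 = s - 3 by ring] at this
        exact this
      · have := comp 1 (-2) (-1) (-1) r s v hv
        rw [show r + 1 + -1 = r by ring, show s + -2 + -1 + 2 = s - 1 by ring,
          show s + -2 + -1 + 1 = s - 2 by ring, show s + -2 + -1 = s - 3 by ring] at this
        exact this
      · have hst := hgrade 0 (-2) r s v hv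
        rw [show r + 0 = r by ring, show s + -2 + 1 = s - 1 by ring,
          show s + -2 = s - 2 by ring] at hst
        exact Submodule.mem_sup_left hst
      · have hst := hgrade 0 (-3) r s v hv
        rw [show r + 0 = r by ring, show s + -3 + 1 = s - 2 by ring,
          show s + -3 = s - 3 by ring] at hst
        exact (sup_le (le_sup_of_le_left le_sup_right) le_sup_right :
          g (r, s - 2) ⊔ g (r, s - 3) ≤ _) hst
    have hb : g (r, s - 1) ⊔ g (r, s - 2) ⊔ g (r, s - 3)
        ≤ ⨆ i ∈ ({(r, s - 1), (r, s - 2), (r, s - 3)} : Set (ℤ × ℤ)), g i := by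
      refine sup_le (sup_le ?_ ?_) ?_ <;> exact le_biSup g (by simp)
    have dA : Disjoint (g (r, s)) (g (r, s - 1) ⊔ g (r, s - 2) ⊔ g (r, s - 3)) :=
      (ind.disjoint_biSup (by simp [Prod.ext_iff]; omega)).mono_right hb
    have hb1 : g (r, s) ⊔ (g (r, s - 1) ⊔ g (r, s - 2) ⊔ g (r, s - 3))
        ≤ ⨆ i ∈ (insert (r, s) {(r, s - 1), (r, s - 2), (r, s - 3)} : Set (ℤ × ℤ)), g i :=
      sup_le (le_biSup g (by simp))
        (hb.trans (biSup_mono fun i hi => Set.mem_insert_of_mem _ hi))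
    have dC : Disjoint (g (r, s + 1))
        (g (r, s) ⊔ (g (r, s - 1) ⊔ g (r, s - 2) ⊔ g (r, s - 3))) :=
      (ind.disjoint_biSup (by simp [Prod.ext_iff]; omega)).mono_right hb1
    have hb2 : g (r, s + 1) ⊔ (g (r, s) ⊔ (g (r, s - 1) ⊔ g (r, s - 2) ⊔ g (r, s - 3)))
        ≤ ⨆ i ∈ (insert (r, s + 1) (insert (r, s)
            {(r, s - 1), (r, s - 2), (r, s - 3)}) : Set (ℤ × ℤ)), g i :=
      sup_le (le_biSup g (by simp))
        (hb1.trans (biSup_mono fun i hi => Set.mem_insert_of_mem _ hi))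
    have dD : Disjoint (g (r, s + 2))
        (g (r, s + 1) ⊔ (g (r, s) ⊔ (g (r, s - 1) ⊔ g (r, s - 2) ⊔ g (r, s - 3)))) :=
      (ind.disjoint_biSup (by simp [Prod.ext_iff]; omega)).mono_right hb2
    have dis : Disjoint (g (r, s + 2) ⊔ g (r, s + 1) ⊔ g (r, s))
        (g (r, s - 1) ⊔ g (r, s - 2) ⊔ g (r, s - 3)) :=
      Disjoint.disjoint_sup_left_of_disjoint_sup_right dA
        (Disjoint.disjoint_sup_left_of_disjoint_sup_right dC dD)
    exact Submodule.disjoint_def.mp dis (C v) mem2 mem1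
  have hker : (⊤ : Submodule ℂ V) ≤ LinearMap.ker C := by
    rw [← hg.submodule_iSup_eq_top]
    exact iSup_le fun p v hv => LinearMap.mem_ker.mpr (key p v hv)
  exact LinearMap.ker_eq_top.mp (top_le_iff.mp hker)
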